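/- Let r < s < t be real numbers and x, y, z ∈ ℝⁿ. Then (t−r) L((x−z)/(t−r)) − (s−r) L((y−z)/(s−r)) = (t−s) L((x−y)/(t−s)) − (1/(t−r)) L( √((s−r)/(t−s)) (x−y) − √((t−s)/(s−r)) (y−z) ). In particular (t−r) L((x−z)/(t−r)) ≤ (t−s) L((x−y)/(t−s)) + (s−r) L((y−z)/(s−r)). -/

import Mathlib

open scoped RealInnerProductSpace
open Filter Topology Set Metric

noncomputable section

/-- The Lagrangian `L(q) = ½ ⟨A⁻¹ q, q⟩`. -/
def Lag {n : ℕ} (A : Matrix (Fin n) (Fin n) ℝ) (q : EuclideanSpace ℝ (Fin n)) : ℝ :=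
  (1 / 2) * ⟪Matrix.toEuclideanLin A⁻¹ q, q⟫

/-- The Hamiltonian `H(p) = ½ ⟨A p, p⟩`. -/
def Ham {n : ℕ} (A : Matrix (Fin n) (Fin n) ℝ) (p : EuclideanSpace ℝ (Fin n)) : ℝ :=
  (1 / 2) * ⟪Matrix.toEuclideanLin A p, p⟫

/-- Euclidean norm on `ℝ × ℝⁿ`. -/
def pnorm {n : ℕ} (V : ℝ × EuclideanSpace ℝ (Fin n)) : ℝ :=
  Real.sqrt (V.1 ^ 2 + ‖V.2‖ ^ 2)

/-- Euclidean pairing on `ℝ × ℝⁿ`. -/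
def pairR {n : ℕ} (P V : ℝ × EuclideanSpace ℝ (Fin n)) : ℝ :=
  P.1 * V.1 + ⟪P.2, V.2⟫

/-- Open Euclidean ball in `ℝ × ℝⁿ`. -/
def pball {n : ℕ} (X : ℝ × EuclideanSpace ℝ (Fin n)) (R : ℝ) :
    Set (ℝ × EuclideanSpace ℝ (Fin n)) :=
  {Y | pnorm (Y - X) < R}

/-- `B_t̄(X,R) = ((t̄,∞) × ℝⁿ) ∩ B(X,R)`. -/
def tball {n : ℕ} (tbar : ℝ) (X : ℝ × EuclideanSpace ℝ (Fin n)) (R : ℝ) :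
    Set (ℝ × EuclideanSpace ℝ (Fin n)) :=
  {Y | tbar < Y.1} ∩ pball X R

/-- Superdifferential of `w` at `X`:
`P ∈ D⁺w(X)` iff `limsup_{Y→X} (w(Y)−w(X)−⟨P,Y−X⟩)/|Y−X| ≤ 0`. -/
def superDiff {n : ℕ} (w : ℝ × EuclideanSpace ℝ (Fin n) → ℝ)
    (X P : ℝ × EuclideanSpace ℝ (Fin n)) : Prop :=
  ∀ ε > 0, ∀ᶠ Y in 𝓝[≠] X, w Y - w X - pairR P (Y - X) ≤ ε * pnorm (Y - X)

/-! With `a = t - s`, `b = s - r`, `u = x - y`, `v = y - z`, homogeneity `c L(c⁻¹ w) = c⁻¹ L(w)`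
reduces the identity to
`(a + b)⁻¹ L(u + v) + (a + b)⁻¹ L(√(b/a) u - √(a/b) v) = a⁻¹ L(u) + b⁻¹ L(v)`,
which holds for every quadratic form: the polar terms cancel since `√(b/a) √(a/b) = 1`.
The inequality follows because `L` is nonnegative when `A` is positive definite. -/

namespace QuadraticMap

variable {M : Type*} [AddCommGroup M] [Module ℝ M] (Q : QuadraticForm ℝ M) {a b : ℝ}

theorem map_smul_add_smul (α β : ℝ) (u v : M) :
    Q (α • u + β • v) = α ^ 2 * Q u + β ^ 2 * Q v + α * β * polar Q u v := by
  rw [QuadraticMap.map_add Q, Q.map_smul, Q.map_smul, polar_smul_left, polar_smul_right]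
  simp only [smul_eq_mul]
  ring

theorem mul_map_inv_smul {c : ℝ} (hc : c ≠ 0) (w : M) : c * Q (c⁻¹ • w) = c⁻¹ * Q w := by
  rw [Q.map_smul, smul_eq_mul]
  field_simp

theorem inv_add_mul_map_add_add_map_sqrt_smul_sub (ha : 0 < a) (hb : 0 < b) (u v : M) :
    (a + b)⁻¹ * Q (u + v) + (a + b)⁻¹ * Q (√(b / a) • u - √(a / b) • v) =
      a⁻¹ * Q u + b⁻¹ * Q v := by
  have h_sq_ba : √(b / a) ^ 2 = b / a := Real.sq_sqrt (by positivity)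
  have h_sq_ab : √(a / b) ^ 2 = a / b := Real.sq_sqrt (by positivity)
  have h_prod : √(b / a) * √(a / b) = 1 := by
    rw [← Real.sqrt_mul (by positivity), div_mul_div_cancel₀ ha.ne', div_self hb.ne',
      Real.sqrt_one]
  rw [sub_eq_add_neg, ← neg_smul, map_smul_add_smul, neg_sq, h_sq_ba, h_sq_ab, mul_neg, h_prod,
    QuadraticMap.map_add Q]
  field_simp
  ring

theorem mul_map_inv_smul_add_sub_mul_map_inv_smul (ha : 0 < a) (hb : 0 < b) (u v : M) :
    (a + b) * Q ((a + b)⁻¹ • (u + v)) - b * Q (b⁻¹ • v) =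
      a * Q (a⁻¹ • u) - (a + b)⁻¹ * Q (√(b / a) • u - √(a / b) • v) := by
  rw [Q.mul_map_inv_smul (by positivity), Q.mul_map_inv_smul hb.ne', Q.mul_map_inv_smul ha.ne']
  linarith [Q.inv_add_mul_map_add_add_map_sqrt_smul_sub ha hb u v]

theorem mul_map_inv_smul_add_le (hQ : ∀ w, 0 ≤ Q w) (ha : 0 < a) (hb : 0 < b) (u v : M) :
    (a + b) * Q ((a + b)⁻¹ • (u + v)) ≤ a * Q (a⁻¹ • u) + b * Q (b⁻¹ • v) := by
  have h_id := Q.mul_map_inv_smul_add_sub_mul_map_inv_smul ha hb u v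
  have h_nonneg : 0 ≤ (a + b)⁻¹ * Q (√(b / a) • u - √(a / b) • v) :=
    mul_nonneg (by positivity) (hQ _)
  linarith

end QuadraticMap

def lagForm {n : ℕ} (A : Matrix (Fin n) (Fin n) ℝ) : QuadraticForm ℝ (EuclideanSpace ℝ (Fin n)) :=
  (1 / 2 : ℝ) • LinearMap.BilinMap.toQuadraticMap ((innerₗ _).comp (Matrix.toEuclideanLin A⁻¹))

theorem lagForm_apply {n : ℕ} (A : Matrix (Fin n) (Fin n) ℝ) (q : EuclideanSpace ℝ (Fin n)) :
    lagForm A q = Lag A q :=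
  rfl

theorem lagForm_nonneg {n : ℕ} {A : Matrix (Fin n) (Fin n) ℝ} (hA : A.PosDef)
    (q : EuclideanSpace ℝ (Fin n)) : 0 ≤ lagForm A q :=
  mul_nonneg (by norm_num)
    ((Matrix.isPositive_toEuclideanLin_iff.mpr hA.inv.posSemidef).inner_nonneg_left q)

theorem statement4 {n : ℕ}
    (A : Matrix (Fin n) (Fin n) ℝ) (hA : A.PosDef)
    (r s t : ℝ) (hrs : r < s) (hst : s < t)
    (x y z : EuclideanSpace ℝ (Fin n)) :
    (t - r) * Lag A ((t - r)⁻¹ • (x - z)) - (s - r) * Lag A ((s - r)⁻¹ • (y - z)) =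
      (t - s) * Lag A ((t - s)⁻¹ • (x - y)) -
        (t - r)⁻¹ * Lag A (Real.sqrt ((s - r) / (t - s)) • (x - y) -
          Real.sqrt ((t - s) / (s - r)) • (y - z)) ∧
    (t - r) * Lag A ((t - r)⁻¹ • (x - z)) ≤
      (t - s) * Lag A ((t - s)⁻¹ • (x - y)) + (s - r) * Lag A ((s - r)⁻¹ • (y - z)) := by
  have hts : 0 < t - s := sub_pos.mpr hst
  have hsr : 0 < s - r := sub_pos.mpr hrs
  rw [show t - r = (t - s) + (s - r) by ring, show x - z = (x - y) + (y - z) by abel]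
  simp only [← lagForm_apply]
  exact ⟨(lagForm A).mul_map_inv_smul_add_sub_mul_map_inv_smul hts hsr _ _,
    (lagForm A).mul_map_inv_smul_add_le (lagForm_nonneg hA) hts hsr _ _⟩
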